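/- Let f_SP and f_SC denote, for a two-terminal graph with rational edge weights, the weighted generating functions of source-to-sink simple paths and of simple cycles respectively (weight of a path/cycle is the product of its edge weights). Then under parallel composition of two edge-disjoint two-terminal graphs G₁ ∥ G₂ sharing only the two terminals: f_SC(G₁ ∥ G₂) = f_SC(G₁) + f_SC(G₂) + f_SP(G₁)·f_SP(G₂). This follows from the bijection SC(G₁ ∥ G₂) = SC(G₁) ⊔ SC(G₂) ⊔ { concatenation of γ₁ ∈ SP(G₁) with the reverse of γ₂ ∈ SP(G₂) }, which is to be proven: every simple cycle of G₁ ∥ G₂ either lies entirely in G₁, or entirely in G₂, or decomposes uniquely as a source-to-sink simple path in G₁ followed by a reversed source-to-sink simple path in G₂. -/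

import Mathlib

open scoped Classical
open Finset

/-- Weighted generating function of the simple cycles of `H`: the sum, over edge
sets of cycles of `H`, of the product of the edge weights. -/
noncomputable def cycleGF {V : Type*} [Fintype V] [DecidableEq V]
    (H : SimpleGraph V) (w : Sym2 V → ℚ) : ℚ :=
  ∑ C ∈ (univ : Finset (Finset (Sym2 V))).filter
      (fun C => ∃ (v : V) (c : H.Walk v v), c.IsCycle ∧ c.edges.toFinset = C),
    ∏ e ∈ C, w e

/-- Weighted generating function of the simple paths of `H` from `σ` to `τ`. -/
noncomputable def pathGF {V : Type*} [Fintype V] [DecidableEq V]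
    (H : SimpleGraph V) (σ τ : V) (w : Sym2 V → ℚ) : ℚ :=
  ∑ C ∈ (univ : Finset (Finset (Sym2 V))).filter
      (fun C => ∃ p : H.Walk σ τ, p.IsPath ∧ p.edges.toFinset = C),
    ∏ e ∈ C, w e

/-!
A walk in `G₁ ⊔ G₂` can pass from an edge of `G₁` to an edge of `G₂` only at a vertex shared by
both graphs, that is, at `σ` or `τ`. Hence a cycle using edges of both graphs goes through `σ`
and `τ`, and cutting it at these two vertices leaves a `σ`–`τ` path in `G₁` and one in `G₂`.
The decomposition is unique because the edge sets of `G₁` and `G₂` are disjoint and a path is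
determined by its endpoints and its edge set. Conversely, a `σ`–`τ` path of `G₁` followed by the
reverse of one of `G₂` is a cycle. So the edge sets of cycles of `G₁ ⊔ G₂` are partitioned into
those of `G₁`, those of `G₂` and unions of path edge sets, and summing weights over this
partition gives the identity for the generating functions.
-/

lemma Finset.filter_union_eq_left {α : Type*} [DecidableEq α] {A B : Finset α}
    {P : α → Prop} [DecidablePred P] (hA : ∀ a ∈ A, P a) (hB : ∀ b ∈ B, ¬ P b) :
    (A ∪ B).filter P = A := by
  rw [filter_union, filter_true_of_mem hA, filter_false_of_mem hB, union_empty]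

namespace SimpleGraph.Walk

variable {V : Type*} {G H K : SimpleGraph V} {u v : V}

lemma IsPath.start_notMem_support_tail {p : G.Walk u v} (hp : p.IsPath) : u ∉ p.support.tail :=
  (List.nodup_cons.mp (p.cons_tail_support ▸ hp.support_nodup)).1

theorem IsPath.eq_of_edges_subset {p q : G.Walk u v} (hp : p.IsPath) (hq : q.IsPath)
    (h : p.edges ⊆ q.edges) : p = q := by
  induction p with
  | nil => exact (eq_nil_iff_nil.mpr (isPath_iff_nil.mp hq)).symm
  | @cons u a v hadj p ih =>
    cases q with
    | nil => exact absurd (isPath_iff_nil.mp hp) (by simp)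
    | @cons _ b _ hadj' q =>
      obtain rfl : a = b := by simpa using hq.eq_snd_of_mem_edges (h (by simp))
      rw [cons_isPath_iff] at hp hq
      congr
      refine ih hp.1 hq.1 fun e he => ?_
      have hu : e ≠ s(u, a) := fun hu => hp.2 (p.fst_mem_support_of_mem_edges (hu ▸ he))
      simpa [hu] using h (List.mem_cons_of_mem _ he)

lemma IsPath.isCycle_append_of_disjoint_edges {p : G.Walk u v} {q : G.Walk v u} (hp : p.IsPath)
    (hq : q.IsPath) (huv : u ≠ v) (he : p.edges.Disjoint q.edges)
    (hs : p.support.tail.Disjoint q.support.tail) : (p.append q).IsCycle := by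
  refine (isCycle_def _).mpr ⟨?_, fun h => not_nil_of_ne (p := p) huv ?_, ?_⟩
  · rw [isTrail_def, edges_append]
    exact List.nodup_append'.mpr ⟨hp.isTrail.edges_nodup, hq.isTrail.edges_nodup, he⟩
  · exact (nil_append_iff.mp (h ▸ Nil.nil)).1
  · rw [tail_support_append]
    exact List.nodup_append'.mpr ⟨hp.support_nodup.tail, hq.support_nodup.tail, hs⟩

lemma edges_subset_of_forall_mem_or {l : List (Sym2 V)} {a b c d : V} {p : H.Walk a b}
    {q : K.Walk c d} (hHK : Disjoint H.edgeSet K.edgeSet)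
    (h : ∀ e ∈ p.edges, e ∈ l ∨ e ∈ q.edges) : p.edges ⊆ l := fun e he =>
  (h e he).resolve_right fun hq =>
    Set.disjoint_left.mp hHK (p.edges_subset_edgeSet he) (q.edges_subset_edgeSet hq)

variable {G₁ G₂ : SimpleGraph V}

/-- Since `p.support.tail` has no duplicates, `h` says that no interior vertex of `p` is shared by
`G₁` and `G₂`. -/
theorem forall_edges_mem_or_of_nodup_tail (p : (G₁ ⊔ G₂).Walk u v)
    (hp : p.support.tail.Nodup)
    (h : ∀ x ∈ p.support.tail, x ∈ G₁.support → x ∈ G₂.support → x = v) :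
    (∀ e ∈ p.edges, e ∈ G₁.edgeSet) ∨ (∀ e ∈ p.edges, e ∈ G₂.edgeSet) := by
  induction p with
  | nil => simp
  | @cons u a v hadj p ih =>
    rw [support_cons, List.tail_cons] at hp h
    simp only [edges_cons, List.forall_mem_cons]
    have hp' := ih hp.tail fun x hx => h x (List.mem_of_mem_tail hx)
    by_cases hnil : p.Nil
    · simpa [edges_eq_nil.mpr hnil] using hadj
    have ha : a ∈ G₁.support → a ∈ G₂.support → False := fun h₁ h₂ =>
      (IsPath.mk' hp).nil_iff_eq.not.mp hnil (h a p.start_mem_support h₁ h₂)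
    have hsnd := mk_start_snd_mem_edges hnil
    rcases hadj with hadj | hadj <;> rcases hp' with hp₁ | hp₂
    · exact Or.inl ⟨hadj, hp₁⟩
    · exact (ha ⟨u, hadj.symm⟩ ⟨_, hp₂ _ hsnd⟩).elim
    · exact (ha ⟨_, hp₁ _ hsnd⟩ ⟨u, hadj.symm⟩).elim
    · exact Or.inr ⟨hadj, hp₂⟩

theorem IsPath.forall_edges_mem_or {p : (G₁ ⊔ G₂).Walk u v} (hp : p.IsPath)
    (hvert : G₁.support ∩ G₂.support ⊆ {u, v}) :
    (∀ e ∈ p.edges, e ∈ G₁.edgeSet) ∨ (∀ e ∈ p.edges, e ∈ G₂.edgeSet) :=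
  p.forall_edges_mem_or_of_nodup_tail hp.support_nodup.tail fun x hx h₁ h₂ =>
    (hvert ⟨h₁, h₂⟩).resolve_left fun hxu => hp.start_notMem_support_tail (hxu ▸ hx)

variable {σ τ : V}

theorem IsCycle.exists_paths_of_start {c : (G₁ ⊔ G₂).Walk σ σ} (hc : c.IsCycle) (hστ : σ ≠ τ)
    (hvert : G₁.support ∩ G₂.support ⊆ {σ, τ}) (h₁ : ¬ ∀ e ∈ c.edges, e ∈ G₁.edgeSet)
    (h₂ : ¬ ∀ e ∈ c.edges, e ∈ G₂.edgeSet) :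
    ∃ (p : G₁.Walk σ τ) (q : G₂.Walk σ τ), p.IsPath ∧ q.IsPath ∧
      ∀ e, e ∈ c.edges ↔ e ∈ p.edges ∨ e ∈ q.edges := by
  have hτ : τ ∈ c.support := by
    by_contra hτ
    refine (c.forall_edges_mem_or_of_nodup_tail hc.support_nodup fun x hx hx₁ hx₂ => ?_).elim
      h₁ h₂
    exact (hvert ⟨hx₁, hx₂⟩).resolve_right fun hxτ => hτ (hxτ ▸ List.mem_of_mem_tail hx)
  set p := c.takeUntil τ hτ
  set q := c.dropUntil τ hτ
  have hpq : (p.append q).edges = c.edges := congrArg edges (c.take_spec hτ)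
  have hp : p.IsPath := hc.isPath_takeUntil hτ
  have hq : q.IsPath :=
    ((c.take_spec hτ).symm ▸ hc : (p.append q).IsCycle).isPath_of_append_right (not_nil_of_ne hστ)
  have hc_edges : ∀ e, e ∈ c.edges ↔ e ∈ p.edges ∨ e ∈ q.edges := fun e => by
    rw [← hpq, edges_append, List.mem_append]
  rcases hp.forall_edges_mem_or hvert with hp₁ | hp₂ <;>
    rcases hq.forall_edges_mem_or (Set.pair_comm σ τ ▸ hvert) with hq₁ | hq₂
  · exact (h₁ fun e he => ((hc_edges e).mp he).elim (hp₁ e) (hq₁ e)).elim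
  · exact ⟨p.transfer G₁ hp₁, q.reverse.transfer G₂ (by simpa using hq₂), hp.transfer _,
      hq.reverse.transfer _, by simpa [edges_transfer] using hc_edges⟩
  · exact ⟨q.reverse.transfer G₁ (by simpa using hq₁), p.transfer G₂ hp₂, hq.reverse.transfer _,
      hp.transfer _, by simpa [edges_transfer, or_comm] using hc_edges⟩
  · exact (h₂ fun e he => ((hc_edges e).mp he).elim (hp₂ e) (hq₂ e)).elim

theorem IsCycle.exists_paths {c : (G₁ ⊔ G₂).Walk v v} (hc : c.IsCycle) (hστ : σ ≠ τ)
    (hvert : G₁.support ∩ G₂.support ⊆ {σ, τ}) (h₁ : ¬ ∀ e ∈ c.edges, e ∈ G₁.edgeSet)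
    (h₂ : ¬ ∀ e ∈ c.edges, e ∈ G₂.edgeSet) :
    ∃ (p : G₁.Walk σ τ) (q : G₂.Walk σ τ), p.IsPath ∧ q.IsPath ∧
      ∀ e, e ∈ c.edges ↔ e ∈ p.edges ∨ e ∈ q.edges := by
  obtain ⟨x, hx, hx₁, hx₂⟩ : ∃ x ∈ c.support, x ∈ G₁.support ∧ x ∈ G₂.support := by
    by_contra! h
    exact (c.forall_edges_mem_or_of_nodup_tail hc.support_nodup fun x hx hx₁ hx₂ =>
      (h x (List.mem_of_mem_tail hx) hx₁ hx₂).elim).elim h₁ h₂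
  have hrot : ∀ e, e ∈ (c.rotate x hx).edges ↔ e ∈ c.edges :=
    fun e => (c.rotate_edges x hx).perm.mem_iff
  simp only [← hrot] at h₁ h₂ ⊢
  rcases hvert ⟨hx₁, hx₂⟩ with rfl | rfl
  · exact (hc.rotate hx).exists_paths_of_start hστ hvert h₁ h₂
  · obtain ⟨p, q, hp, hq, he⟩ :=
      (hc.rotate hx).exists_paths_of_start hστ.symm (Set.pair_comm σ x ▸ hvert) h₁ h₂
    exact ⟨p.reverse, q.reverse, hp.reverse, hq.reverse, by simpa using he⟩

theorem IsPath.isCycle_append_reverse {p : G₁.Walk σ τ} {q : G₂.Walk σ τ} (hp : p.IsPath)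
    (hq : q.IsPath) (hστ : σ ≠ τ) (hvert : G₁.support ∩ G₂.support ⊆ {σ, τ})
    (hedge : Disjoint G₁.edgeSet G₂.edgeSet) :
    ((p.mapLe le_sup_left).append (q.reverse.mapLe le_sup_right)).IsCycle := by
  refine (hp.mapLe _).isCycle_append_of_disjoint_edges (hq.reverse.mapLe _) hστ ?_ ?_
  · simp only [edges_mapLe_eq_edges, edges_reverse, List.disjoint_reverse_right]
    exact fun e hp' hq' =>
      Set.disjoint_left.mp hedge (p.edges_subset_edgeSet hp') (q.edges_subset_edgeSet hq')
  · simp only [support_mapLe_eq_support]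
    intro x hxp hxq
    have hx₁ := mem_support_of_mem_walk_support p (not_nil_of_ne hστ) (List.mem_of_mem_tail hxp)
    have hx₂ := mem_support_of_mem_walk_support q.reverse (not_nil_of_ne hστ.symm)
      (List.mem_of_mem_tail hxq)
    rcases hvert ⟨hx₁, hx₂⟩ with rfl | rfl
    exacts [hp.start_notMem_support_tail hxp, hq.reverse.start_notMem_support_tail hxq]

theorem IsPath.eq_and_eq_of_edges_union {p p' : G₁.Walk σ τ} {q q' : G₂.Walk σ τ}
    (hp : p.IsPath) (hq : q.IsPath) (hp' : p'.IsPath) (hq' : q'.IsPath)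
    (hedge : Disjoint G₁.edgeSet G₂.edgeSet)
    (h : ∀ e, e ∈ p.edges ∨ e ∈ q.edges ↔ e ∈ p'.edges ∨ e ∈ q'.edges) : p = p' ∧ q = q' :=
  ⟨hp.eq_of_edges_subset hp' (edges_subset_of_forall_mem_or hedge fun e he => (h e).mp (.inl he)),
    hq.eq_of_edges_subset hq'
      (edges_subset_of_forall_mem_or hedge.symm fun e he => ((h e).mp (.inr he)).symm)⟩

theorem not_forall_edges_mem_of_edges_eq_union (c : (G₁ ⊔ G₂).Walk v v) {p : G₁.Walk σ τ}
    {q : G₂.Walk σ τ} (hστ : σ ≠ τ) (hedge : Disjoint G₁.edgeSet G₂.edgeSet)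
    (h : {e | e ∈ c.edges} = {e | e ∈ p.edges} ∪ {e | e ∈ q.edges}) :
    (¬ ∀ e ∈ c.edges, e ∈ G₁.edgeSet) ∧ ¬ ∀ e ∈ c.edges, e ∈ G₂.edgeSet := by
  have hp := mk_start_snd_mem_edges (p := p) (not_nil_of_ne hστ)
  have hq := mk_start_snd_mem_edges (p := q) (not_nil_of_ne hστ)
  have hc := Set.ext_iff.mp h
  exact ⟨fun h₁ => Set.disjoint_left.mp hedge (h₁ _ ((hc _).mpr (.inr hq)))
      (q.edges_subset_edgeSet hq),
    fun h₂ => Set.disjoint_left.mp hedge (p.edges_subset_edgeSet hp)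
      (h₂ _ ((hc _).mpr (.inl hp)))⟩

end SimpleGraph.Walk

section GeneratingFunctions

open SimpleGraph Walk

variable {V : Type*} [Fintype V] [DecidableEq V]

noncomputable def cycleEdgeSets (H : SimpleGraph V) : Finset (Finset (Sym2 V)) :=
  univ.filter fun C => ∃ (v : V) (c : H.Walk v v), c.IsCycle ∧ c.edges.toFinset = C

noncomputable def pathEdgeSets (H : SimpleGraph V) (σ τ : V) : Finset (Finset (Sym2 V)) :=
  univ.filter fun C => ∃ p : H.Walk σ τ, p.IsPath ∧ p.edges.toFinset = C

lemma cycleGF_eq_sum (H : SimpleGraph V) (w : Sym2 V → ℚ) :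
    cycleGF H w = ∑ C ∈ cycleEdgeSets H, ∏ e ∈ C, w e := rfl

lemma pathGF_eq_sum (H : SimpleGraph V) (σ τ : V) (w : Sym2 V → ℚ) :
    pathGF H σ τ w = ∑ C ∈ pathEdgeSets H σ τ, ∏ e ∈ C, w e := rfl

omit [Fintype V] in
lemma coe_edges_toFinset_subset {H : SimpleGraph V} {u v : V} (p : H.Walk u v) :
    ↑p.edges.toFinset ⊆ H.edgeSet := fun _ he =>
  p.edges_subset_edgeSet (List.mem_toFinset.mp he)

omit [Fintype V] in
lemma edges_toFinset_nonempty {H : SimpleGraph V} {u v : V} {p : H.Walk u v} (hp : ¬ p.Nil) :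
    p.edges.toFinset.Nonempty := by
  simpa [List.toFinset_nonempty_iff, edges_eq_nil] using hp

variable {H : SimpleGraph V} {σ τ : V} {C : Finset (Sym2 V)}

lemma coe_subset_edgeSet_of_mem_cycleEdgeSets (hC : C ∈ cycleEdgeSets H) : ↑C ⊆ H.edgeSet := by
  obtain ⟨v, c, -, rfl⟩ := (mem_filter.mp hC).2
  exact coe_edges_toFinset_subset c

lemma nonempty_of_mem_cycleEdgeSets (hC : C ∈ cycleEdgeSets H) : C.Nonempty := by
  obtain ⟨v, c, hc, rfl⟩ := (mem_filter.mp hC).2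
  exact edges_toFinset_nonempty hc.not_nil

lemma coe_subset_edgeSet_of_mem_pathEdgeSets (hC : C ∈ pathEdgeSets H σ τ) :
    ↑C ⊆ H.edgeSet := by
  obtain ⟨p, -, rfl⟩ := (mem_filter.mp hC).2
  exact coe_edges_toFinset_subset p

lemma nonempty_of_mem_pathEdgeSets (hστ : σ ≠ τ) (hC : C ∈ pathEdgeSets H σ τ) : C.Nonempty := by
  obtain ⟨p, -, rfl⟩ := (mem_filter.mp hC).2
  exact edges_toFinset_nonempty (not_nil_of_ne hστ)

variable {G₁ G₂ : SimpleGraph V}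

theorem cycleEdgeSets_sup (hστ : σ ≠ τ) (hvert : G₁.support ∩ G₂.support ⊆ {σ, τ})
    (hedge : Disjoint G₁.edgeSet G₂.edgeSet) :
    cycleEdgeSets (G₁ ⊔ G₂) = cycleEdgeSets G₁ ∪ cycleEdgeSets G₂ ∪
      (pathEdgeSets G₁ σ τ ×ˢ pathEdgeSets G₂ σ τ).image fun C => C.1 ∪ C.2 := by
  ext C
  simp only [cycleEdgeSets, pathEdgeSets, mem_union, mem_image, mem_product, mem_filter,
    mem_univ, true_and, Prod.exists]
  constructor
  · rintro ⟨v, c, hc, rfl⟩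
    by_cases h₁ : ∀ e ∈ c.edges, e ∈ G₁.edgeSet
    · exact .inl (.inl ⟨v, c.transfer G₁ h₁, hc.transfer h₁, by rw [edges_transfer]⟩)
    by_cases h₂ : ∀ e ∈ c.edges, e ∈ G₂.edgeSet
    · exact .inl (.inr ⟨v, c.transfer G₂ h₂, hc.transfer h₂, by rw [edges_transfer]⟩)
    obtain ⟨p, q, hp, hq, he⟩ := hc.exists_paths hστ hvert h₁ h₂
    exact .inr ⟨_, _, ⟨⟨p, hp, rfl⟩, ⟨q, hq, rfl⟩⟩, by ext e; simp [he]⟩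
  · rintro ((⟨v, c, hc, rfl⟩ | ⟨v, c, hc, rfl⟩) | ⟨_, _, ⟨⟨p, hp, rfl⟩, ⟨q, hq, rfl⟩⟩, rfl⟩)
    · exact ⟨v, c.mapLe le_sup_left, hc.mapLe _, by simp⟩
    · exact ⟨v, c.mapLe le_sup_right, hc.mapLe _, by simp⟩
    · exact ⟨σ, _, hp.isCycle_append_reverse hq hστ hvert hedge, by ext; simp⟩

omit [Fintype V] [DecidableEq V] in
lemma eq_empty_of_coe_subset_edgeSet (hedge : Disjoint G₁.edgeSet G₂.edgeSet)
    (h₁ : ↑C ⊆ G₁.edgeSet) (h₂ : ↑C ⊆ G₂.edgeSet) : C = ∅ :=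
  (disjoint_self_iff_empty C).mp (disjoint_coe.mp (hedge.mono h₁ h₂))

lemma disjoint_cycleEdgeSets (hedge : Disjoint G₁.edgeSet G₂.edgeSet) :
    Disjoint (cycleEdgeSets G₁) (cycleEdgeSets G₂) :=
  Finset.disjoint_left.mpr fun _ h₁ h₂ => (nonempty_of_mem_cycleEdgeSets h₁).ne_empty
    (eq_empty_of_coe_subset_edgeSet hedge (coe_subset_edgeSet_of_mem_cycleEdgeSets h₁)
      (coe_subset_edgeSet_of_mem_cycleEdgeSets h₂))

lemma disjoint_cycleEdgeSets_image_union (hστ : σ ≠ τ) (hedge : Disjoint G₁.edgeSet G₂.edgeSet) :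
    Disjoint (cycleEdgeSets G₁ ∪ cycleEdgeSets G₂)
      ((pathEdgeSets G₁ σ τ ×ˢ pathEdgeSets G₂ σ τ).image fun C => C.1 ∪ C.2) := by
  simp only [Finset.disjoint_left, mem_union, mem_image, mem_product, not_exists, not_and]
  rintro _ (hS | hS) ⟨C₁, C₂⟩ ⟨h₁, h₂⟩ rfl
  · exact (nonempty_of_mem_pathEdgeSets hστ h₂).ne_empty <| eq_empty_of_coe_subset_edgeSet hedge
      ((coe_subset.mpr subset_union_right).trans (coe_subset_edgeSet_of_mem_cycleEdgeSets hS))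
      (coe_subset_edgeSet_of_mem_pathEdgeSets h₂)
  · exact (nonempty_of_mem_pathEdgeSets hστ h₁).ne_empty <| eq_empty_of_coe_subset_edgeSet hedge
      (coe_subset_edgeSet_of_mem_pathEdgeSets h₁)
      ((coe_subset.mpr subset_union_left).trans (coe_subset_edgeSet_of_mem_cycleEdgeSets hS))

lemma injOn_union_pathEdgeSets (hedge : Disjoint G₁.edgeSet G₂.edgeSet) :
    Set.InjOn (fun C : Finset (Sym2 V) × Finset (Sym2 V) => C.1 ∪ C.2)
      ↑(pathEdgeSets G₁ σ τ ×ˢ pathEdgeSets G₂ σ τ) := by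
  have hG₁ {C₁ C₂} (h₁ : C₁ ∈ pathEdgeSets G₁ σ τ) (h₂ : C₂ ∈ pathEdgeSets G₂ σ τ) :
      (C₁ ∪ C₂).filter (· ∈ G₁.edgeSet) = C₁ :=
    filter_union_eq_left (fun _ he => coe_subset_edgeSet_of_mem_pathEdgeSets h₁ he)
      fun _ he he₁ => Set.disjoint_left.mp hedge he₁ (coe_subset_edgeSet_of_mem_pathEdgeSets h₂ he)
  have hG₂ {C₁ C₂} (h₁ : C₁ ∈ pathEdgeSets G₁ σ τ) (h₂ : C₂ ∈ pathEdgeSets G₂ σ τ) :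
      (C₁ ∪ C₂).filter (· ∈ G₂.edgeSet) = C₂ := by
    rw [union_comm]
    exact filter_union_eq_left (fun _ he => coe_subset_edgeSet_of_mem_pathEdgeSets h₂ he)
      fun _ he he₂ => Set.disjoint_left.mp hedge (coe_subset_edgeSet_of_mem_pathEdgeSets h₁ he) he₂
  rintro ⟨C₁, C₂⟩ hC ⟨C₁', C₂'⟩ hC' (h : C₁ ∪ C₂ = C₁' ∪ C₂')
  obtain ⟨h₁, h₂⟩ : C₁ ∈ pathEdgeSets G₁ σ τ ∧ C₂ ∈ pathEdgeSets G₂ σ τ := mem_product.mp hC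
  obtain ⟨h₁', h₂'⟩ : C₁' ∈ pathEdgeSets G₁ σ τ ∧ C₂' ∈ pathEdgeSets G₂ σ τ := mem_product.mp hC'
  exact Prod.ext ((hG₁ h₁ h₂).symm.trans (h ▸ hG₁ h₁' h₂'))
    ((hG₂ h₁ h₂).symm.trans (h ▸ hG₂ h₁' h₂'))

theorem cycleGF_sup (hστ : σ ≠ τ) (hvert : G₁.support ∩ G₂.support ⊆ {σ, τ})
    (hedge : Disjoint G₁.edgeSet G₂.edgeSet) (w : Sym2 V → ℚ) :
    cycleGF (G₁ ⊔ G₂) w =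
      cycleGF G₁ w + cycleGF G₂ w + pathGF G₁ σ τ w * pathGF G₂ σ τ w := by
  rw [cycleGF_eq_sum, cycleEdgeSets_sup hστ hvert hedge,
    sum_union (disjoint_cycleEdgeSets_image_union hστ hedge),
    sum_union (disjoint_cycleEdgeSets hedge), sum_image (injOn_union_pathEdgeSets hedge),
    pathGF_eq_sum, pathGF_eq_sum, sum_mul_sum, ← sum_product']
  refine congrArg _ (sum_congr rfl fun C hC => prod_union ?_)
  obtain ⟨h₁, h₂⟩ := mem_product.mp hC
  exact disjoint_coe.mp (hedge.mono (coe_subset_edgeSet_of_mem_pathEdgeSets h₁)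
    (coe_subset_edgeSet_of_mem_pathEdgeSets h₂))

end GeneratingFunctions

/-- Parallel composition of two-terminal graphs: every simple cycle of `G₁ ∥ G₂`
either lies entirely in `G₁`, or entirely in `G₂`, or decomposes uniquely as a
`σ`–`τ` simple path of `G₁` together with a (reversed) `σ`–`τ` simple path of `G₂`
— and exactly one of the three alternatives holds.  Consequently
`f_SC(G₁ ∥ G₂) = f_SC(G₁) + f_SC(G₂) + f_SP(G₁)·f_SP(G₂)`. -/
theorem stmt_19 {V : Type*} [Fintype V] [DecidableEq V]
    (G₁ G₂ : SimpleGraph V) (σ τ : V) (hστ : σ ≠ τ)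
    (hvert : G₁.support ∩ G₂.support ⊆ {σ, τ})
    (hedge : Disjoint G₁.edgeSet G₂.edgeSet)
    (w : Sym2 V → ℚ) :
    (∀ (v : V) (c : (G₁ ⊔ G₂).Walk v v), c.IsCycle →
      (let A := ∀ e ∈ c.edges, e ∈ G₁.edgeSet
       let B := ∀ e ∈ c.edges, e ∈ G₂.edgeSet
       let C := ∃! pq : G₁.Walk σ τ × G₂.Walk σ τ, pq.1.IsPath ∧ pq.2.IsPath ∧
         {e | e ∈ c.edges} = {e | e ∈ pq.1.edges} ∪ {e | e ∈ pq.2.edges}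
       (A ∧ ¬B ∧ ¬C) ∨ (¬A ∧ B ∧ ¬C) ∨ (¬A ∧ ¬B ∧ C))) ∧
    cycleGF (G₁ ⊔ G₂) w = cycleGF G₁ w + cycleGF G₂ w + pathGF G₁ σ τ w * pathGF G₂ σ τ w := by
  refine ⟨fun v c hc => ?_, cycleGF_sup hστ hvert hedge w⟩
  intro A B C
  have hAB : ¬ (A ∧ B) := fun ⟨hA, hB⟩ =>
    have he := SimpleGraph.Walk.mk_start_snd_mem_edges hc.not_nil
    Set.disjoint_left.mp hedge (hA _ he) (hB _ he)
  have hC : C → ¬ A ∧ ¬ B := by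
    rintro ⟨_, ⟨-, -, he⟩, -⟩
    exact c.not_forall_edges_mem_of_edges_eq_union hστ hedge he
  by_cases hA : A
  · exact .inl ⟨hA, fun hB => hAB ⟨hA, hB⟩, fun h => (hC h).1 hA⟩
  by_cases hB : B
  · exact .inr (.inl ⟨hA, hB, fun h => (hC h).2 hB⟩)
  obtain ⟨p, q, hp, hq, he⟩ := hc.exists_paths hστ hvert hA hB
  refine .inr (.inr ⟨hA, hB, ⟨(p, q), ⟨hp, hq, Set.ext he⟩, ?_⟩⟩)
  rintro ⟨p', q'⟩ ⟨hp', hq', he'⟩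
  obtain ⟨rfl, rfl⟩ := hp'.eq_and_eq_of_edges_union hq' hp hq hedge fun e =>
    (Set.ext_iff.mp he' e).symm.trans (he e)
  rfl
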